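/- Rotational projection reduction for homogeneous viscosity: Let Ω ⊆ ℝ^d be open, let ν ∈ ℝ be a constant, and let ũ, u : ℝ^d → ℝ^d be three times continuously differentiable vector fields with ∇·u = 0 at every point of Ω. Then the scalar field ψ := −2ν(∇·ũ) satisfies, at every point of Ω: Δψ = − Σ_{i,j} ∂_i ∂_j ( 2ν D(ũ − u)_{ij} ). In other words, for a homogeneous viscosity the solution of the shear-rate correction Poisson problem is given explicitly by ψ = −2ν ∇·ũ, recovering the rotational incremental pressure-correction scheme. -/

import Mathlib

/-!
For a `C³` vector field `v`, commuting mixed partials gives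
`Σ_{i,j} ∂_i ∂_j D(v)_{ij} = Δ(∇·v)`. Apply this to `v = ũ − u`: since `∇·u = 0` on the open
set `Ω`, `∇·v` agrees with `∇·ũ` near every point of `Ω`, so both sides equal `−2ν Δ(∇·ũ)`.
-/

/-- Partial derivative `∂_j g` of a scalar field on `ℝ^d`. -/
noncomputable def pdiff {d : ℕ} (j : Fin d) (g : (Fin d → ℝ) → ℝ) (x : Fin d → ℝ) : ℝ :=
  fderiv ℝ g x (Pi.single j 1)

/-- Shear-rate tensor `D(v)_{ij} = (∂_j v_i + ∂_i v_j)/2` of a vector field. -/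
noncomputable def shearD {d : ℕ} (v : (Fin d → ℝ) → (Fin d → ℝ)) (i j : Fin d)
    (x : Fin d → ℝ) : ℝ :=
  (pdiff j (fun y => v y i) x + pdiff i (fun y => v y j) x) / 2

open Filter Topology

section PartialDerivatives

variable {d : ℕ} {f g : (Fin d → ℝ) → ℝ} {x : Fin d → ℝ}

theorem pdiff_const_mul (c : ℝ) (hf : DifferentiableAt ℝ f x) (j : Fin d) :
    pdiff j (fun y => c * f y) x = c * pdiff j f x := by
  simp [pdiff, fderiv_const_mul hf]

theorem pdiff_add (hf : DifferentiableAt ℝ f x) (hg : DifferentiableAt ℝ g x) (j : Fin d) :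
    pdiff j (fun y => f y + g y) x = pdiff j f x + pdiff j g x := by
  simp [pdiff, fderiv_fun_add hf hg]

theorem pdiff_sub (hf : DifferentiableAt ℝ f x) (hg : DifferentiableAt ℝ g x) (j : Fin d) :
    pdiff j (fun y => f y - g y) x = pdiff j f x - pdiff j g x := by
  simp [pdiff, fderiv_fun_sub hf hg]

theorem pdiff_div_const (hf : DifferentiableAt ℝ f x) (c : ℝ) (j : Fin d) :
    pdiff j (fun y => f y / c) x = pdiff j f x / c := by
  simp [pdiff, div_eq_mul_inv, fderiv_mul_const hf, mul_comm]

theorem pdiff_sum {ι : Type*} {s : Finset ι} {F : ι → (Fin d → ℝ) → ℝ}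
    (hF : ∀ i ∈ s, DifferentiableAt ℝ (F i) x) (j : Fin d) :
    pdiff j (fun y => ∑ i ∈ s, F i y) x = ∑ i ∈ s, pdiff j (F i) x := by
  simp [pdiff, fderiv_fun_sum hF]

theorem Filter.EventuallyEq.pdiff (h : f =ᶠ[𝓝 x] g) (j : Fin d) :
    pdiff j f =ᶠ[𝓝 x] pdiff j g :=
  (h.fderiv (𝕜 := ℝ)).mono fun y hy => by simp only [_root_.pdiff, hy]

theorem ContDiff.pdiff {n m : WithTop ℕ∞} (hg : ContDiff ℝ n g) (hmn : m + 1 ≤ n) (j : Fin d) :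
    ContDiff ℝ m (pdiff j g) :=
  (hg.fderiv_right hmn).clm_apply contDiff_const

theorem pdiff_comm (hf : ContDiffAt ℝ 2 f x) (i j : Fin d) :
    pdiff i (pdiff j f) x = pdiff j (pdiff i f) x := by
  have hdf : DifferentiableAt ℝ (fderiv ℝ f) x :=
    (hf.fderiv_right (m := 1) le_rfl).differentiableAt one_ne_zero
  have hsecond : ∀ v w : Fin d → ℝ,
      fderiv ℝ (fun y => fderiv ℝ f y w) x v = fderiv ℝ (fderiv ℝ f) x v w := by
    intro v w
    simp [fderiv_clm_apply hdf (differentiableAt_const w)]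
  change fderiv ℝ (fun y => fderiv ℝ f y (Pi.single j 1)) x (Pi.single i 1)
    = fderiv ℝ (fun y => fderiv ℝ f y (Pi.single i 1)) x (Pi.single j 1)
  rw [hsecond, hsecond]
  exact (hf.isSymmSndFDerivAt (by simp)).eq _ _

end PartialDerivatives

section VectorCalculus

variable {d : ℕ}

noncomputable def divergence (v : (Fin d → ℝ) → (Fin d → ℝ)) (x : Fin d → ℝ) : ℝ :=
  ∑ i, pdiff i (fun y => v y i) x

noncomputable def laplacian (g : (Fin d → ℝ) → ℝ) (x : Fin d → ℝ) : ℝ :=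
  ∑ i, pdiff i (pdiff i g) x

variable {v w : (Fin d → ℝ) → (Fin d → ℝ)} {g : (Fin d → ℝ) → ℝ} {x : Fin d → ℝ}

theorem ContDiff.divergence {n m : WithTop ℕ∞} (hv : ContDiff ℝ n v) (hmn : m + 1 ≤ n) :
    ContDiff ℝ m (_root_.divergence v) :=
  ContDiff.sum fun i _ => (contDiff_pi.1 hv i).pdiff hmn i

theorem ContDiff.shearD {n m : WithTop ℕ∞} (hv : ContDiff ℝ n v) (hmn : m + 1 ≤ n) (i j : Fin d) :
    ContDiff ℝ m (_root_.shearD v i j) :=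
  (((contDiff_pi.1 hv i).pdiff hmn j).add ((contDiff_pi.1 hv j).pdiff hmn i)).div_const 2

theorem divergence_sub (hv : DifferentiableAt ℝ v x) (hw : DifferentiableAt ℝ w x) :
    divergence (fun y => v y - w y) x = divergence v x - divergence w x := by
  simp only [divergence, Pi.sub_apply, ← Finset.sum_sub_distrib]
  exact Finset.sum_congr rfl fun i _ =>
    pdiff_sub (differentiableAt_pi.1 hv i) (differentiableAt_pi.1 hw i) i

theorem laplacian_congr {f : (Fin d → ℝ) → ℝ} (h : f =ᶠ[𝓝 x] g) :
    laplacian f x = laplacian g x :=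
  Finset.sum_congr rfl fun i _ => ((h.pdiff i).pdiff i).eq_of_nhds

theorem pdiff_pdiff_const_mul (c : ℝ) (hg : ContDiff ℝ 2 g) (i j : Fin d) :
    pdiff i (fun y => pdiff j (fun z => c * g z) y) x = c * pdiff i (pdiff j g) x := by
  have hinner : ∀ y, pdiff j (fun z => c * g z) y = c * pdiff j g y := fun y =>
    pdiff_const_mul c ((hg.differentiable two_ne_zero) y) j
  simp only [hinner]
  exact pdiff_const_mul c (((hg.pdiff (m := 1) le_rfl j).differentiable one_ne_zero) x) i

theorem laplacian_const_mul (c : ℝ) (hg : ContDiff ℝ 2 g) :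
    laplacian (fun y => c * g y) x = c * laplacian g x := by
  rw [laplacian, laplacian, Finset.mul_sum]
  exact Finset.sum_congr rfl fun i _ => pdiff_pdiff_const_mul c hg i i

theorem laplacian_divergence (hv : ContDiff ℝ 3 v) :
    laplacian (divergence v) x = ∑ i, ∑ j, pdiff j (pdiff j (pdiff i (fun y => v y i))) x := by
  have hC2 : ∀ i, ContDiff ℝ 2 (pdiff i (fun y => v y i)) := fun i =>
    (contDiff_pi.1 hv i).pdiff le_rfl i
  have hdiv : ∀ j, pdiff j (divergence v) = fun y => ∑ i, pdiff j (pdiff i (fun y => v y i)) y :=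
    fun j => funext fun y =>
      pdiff_sum (fun i _ => ((hC2 i).differentiable two_ne_zero) y) j
  rw [laplacian, Finset.sum_comm]
  refine Finset.sum_congr rfl fun j _ => ?_
  rw [hdiv j]
  exact pdiff_sum
    (fun i _ => (((hC2 i).pdiff (m := 1) le_rfl j).differentiable one_ne_zero) x) j

theorem pdiff_pdiff_shearD (hv : ContDiff ℝ 3 v) (i j k l : Fin d) :
    pdiff k (pdiff l (shearD v i j)) x
      = (pdiff k (pdiff l (pdiff j (fun y => v y i))) x
          + pdiff k (pdiff l (pdiff i (fun y => v y j))) x) / 2 := by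
  have hC2 : ∀ a b, ContDiff ℝ 2 (pdiff a (fun y => v y b)) := fun a b =>
    (contDiff_pi.1 hv b).pdiff le_rfl a
  have hC1 : ∀ a b, Differentiable ℝ (pdiff l (pdiff a (fun y => v y b))) := fun a b =>
    ((hC2 a b).pdiff (m := 1) le_rfl l).differentiable one_ne_zero
  have hinner : pdiff l (shearD v i j)
      = fun y => (pdiff l (pdiff j (fun y => v y i)) y + pdiff l (pdiff i (fun y => v y j)) y) / 2 :=
    funext fun y => by
      have hi := ((hC2 j i).differentiable two_ne_zero) y
      have hj := ((hC2 i j).differentiable two_ne_zero) y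
      rw [← pdiff_add hi hj]
      exact pdiff_div_const (hi.add hj) 2 l
  rw [hinner, ← pdiff_add (hC1 j i x) (hC1 i j x)]
  exact pdiff_div_const ((hC1 j i x).add (hC1 i j x)) 2 k

theorem sum_pdiff_pdiff_shearD (hv : ContDiff ℝ 3 v) :
    ∑ i, ∑ j, pdiff i (pdiff j (shearD v i j)) x = laplacian (divergence v) x := by
  have hC2 : ∀ a b, ContDiff ℝ 2 (pdiff a (fun y => v y b)) := fun a b =>
    (contDiff_pi.1 hv b).pdiff le_rfl a
  have hsymm : ∑ i, ∑ j, pdiff i (pdiff j (pdiff i (fun y => v y j))) x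
      = ∑ i, ∑ j, pdiff i (pdiff j (pdiff j (fun y => v y i))) x := by
    rw [Finset.sum_comm]
    exact Finset.sum_congr rfl fun i _ => Finset.sum_congr rfl fun j _ =>
      pdiff_comm (hC2 j i).contDiffAt j i
  have hreorder : ∑ i, ∑ j, pdiff i (pdiff j (pdiff j (fun y => v y i))) x
      = laplacian (divergence v) x := by
    rw [laplacian_divergence hv]
    refine Finset.sum_congr rfl fun i _ => Finset.sum_congr rfl fun j _ => ?_
    have hcomm : pdiff i (pdiff j (fun y => v y i)) = pdiff j (pdiff i (fun y => v y i)) :=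
      funext fun y => pdiff_comm ((contDiff_pi.1 hv i).of_le (by norm_num)).contDiffAt i j
    rw [pdiff_comm (hC2 j i).contDiffAt i j, hcomm]
  simp only [pdiff_pdiff_shearD hv, ← Finset.sum_div, Finset.sum_add_distrib, hsymm, hreorder]
  ring

end VectorCalculus

/-- Rotational projection reduction for homogeneous viscosity: if `∇·u = 0` on the
open set `Ω`, then `ψ := −2ν (∇·ũ)` satisfies
`Δψ = − Σ_{i,j} ∂_i ∂_j (2ν D(ũ − u)_{ij})` on `Ω`, recovering the rotational
incremental pressure-correction scheme. -/
theorem rotational_projection_reduction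
    (d : ℕ) (Ω : Set (Fin d → ℝ)) (hΩ : IsOpen Ω) (ν : ℝ)
    (ut u : (Fin d → ℝ) → (Fin d → ℝ))
    (hut : ContDiff ℝ 3 ut) (hu : ContDiff ℝ 3 u)
    (hdiv : ∀ x ∈ Ω, (∑ i, pdiff i (fun y => u y i) x) = 0) :
    ∀ x ∈ Ω,
      (∑ i, pdiff i (fun y =>
          pdiff i (fun z => -(2 * ν) * (∑ k, pdiff k (fun w => ut w k) z)) y) x)
        = -(∑ i, ∑ j, pdiff i (fun y =>
            pdiff j (fun z => 2 * ν * shearD (fun w => ut w - u w) i j z) y) x) := by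
  intro x hx
  have hdiv_near : divergence (fun w => ut w - u w) =ᶠ[𝓝 x] divergence ut := by
    filter_upwards [hΩ.mem_nhds hx] with y hy
    rw [divergence_sub ((hut.differentiable (by norm_num)) y) ((hu.differentiable (by norm_num)) y)]
    exact sub_eq_self.2 (hdiv y hy)
  calc _ = -(2 * ν) * laplacian (divergence ut) x :=
        laplacian_const_mul _ (hut.divergence le_rfl)
    _ = -(2 * ν) * laplacian (divergence (fun w => ut w - u w)) x := by
        rw [laplacian_congr hdiv_near]
    _ = -(2 * ν * ∑ i, ∑ j, pdiff i (pdiff j (shearD (fun w => ut w - u w) i j)) x) := by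
        rw [sum_pdiff_pdiff_shearD (hut.sub hu)]
        ring
    _ = _ := by
        simp only [Finset.mul_sum,
          pdiff_pdiff_const_mul _ ((hut.sub hu).shearD (m := 2) le_rfl _ _)]
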